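/- arXiv:1508.06815 — 2 statements merged into one kernel-verified Lean document; each statement's English description precedes it below -/
import Mathlib

section
/- In a triangulated category T with countable direct products, let J be a homological ideal with enough J-injectives. If ι : N → A is a J-monic morphism fitting in an exact triangle N → A → I → ΣN with I J-injective, then ι is J-coversal: every morphism f : B → A lying in J(B, A) factors through ι. -/
open CategoryTheory CategoryTheory.Pretriangulated

/-- In a triangulated category, if `ι : N ⟶ A` is a `J`-monic morphism (a morphism in
the homological ideal `J`) fitting into an exact triangle `N → A → I → ΣN` with `I`
`J`-injective, then `ι` is `J`-coversal: every morphism `f : B ⟶ A` lying in `J(B,A)`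
factors through `ι`. -/
theorem coversal_of_J_monic
    {C : Type*} [Category C] [Limits.HasZeroObject C] [HasShift C ℤ]
    [Preadditive C] [∀ n : ℤ, (CategoryTheory.shiftFunctor C n).Additive]
    [Pretriangulated C]
    (J : ∀ X Y : C, Set (X ⟶ Y))
    (hJpre : ∀ {X Y Z : C} (g : X ⟶ Y) (f : Y ⟶ Z), f ∈ J Y Z → (g ≫ f) ∈ J X Z)
    (hJpost : ∀ {X Y Z : C} (f : X ⟶ Y) (g : Y ⟶ Z), f ∈ J X Y → (f ≫ g) ∈ J X Z)
    (N A I : C) (ι : N ⟶ A) (π : A ⟶ I) (δ : I ⟶ (shiftFunctor C (1 : ℤ)).obj N)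
    (hdist : Triangle.mk ι π δ ∈ distinguishedTriangles (C := C))
    (hι : ι ∈ J N A)
    (hIinj : ∀ {X Y : C} (f : X ⟶ Y), f ∈ J X Y → ∀ g : Y ⟶ I, f ≫ g = 0) :
    ∀ (B : C) (f : B ⟶ A), f ∈ J B A → ∃ g : B ⟶ N, g ≫ ι = f := by
  intro B f hf
  -- `I` is `J`-injective, so `f ≫ π = 0`; exactness of `T(B, -)` on the triangle does the rest.
  obtain ⟨g, hg⟩ := Triangle.coyoneda_exact₂ _ hdist f (hIinj f hf π)
  exact ⟨g, hg.symm⟩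
end

section
/- A compact topological group T is topologically cyclic (i.e., contains an element g with ⟨g⟩ dense in T) if and only if T is isomorphic as a topological group to 𝕋^m × ℤ/ℓℤ for some m ≥ 0 and ℓ ≥ 1, where T is assumed to be a compact abelian Lie group. -/
/-!
A topological generator `g` of `T` maps onto a generator of the discrete factor `F`, so `F` is
cyclic, hence `F ≃ ℤ/|F|`. Conversely, `𝕋^m × ℤ/ℓ` has a topological generator `(g, 1)` by a
Baire category argument: multiplication by a large `n` maps any nonempty open subset of `𝕋^m`
onto all of `𝕋^m`, so for each basic open `U` and residue `j` the set of `g` having some multiple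
`n • g ∈ U` with `n ≡ j (mod ℓ)` is open and dense.
-/

open Set Filter Topology

theorem AddCircle.exists_mem_Ico_nsmul_coe_eq {p : ℝ} [hp : Fact (0 < p)] (x : ℝ) {n : ℕ}
    (hn : n ≠ 0) (y : AddCircle p) : ∃ t ∈ Ico x (x + p / n), n • (t : AddCircle p) = y := by
  obtain ⟨s, rfl⟩ := QuotientAddGroup.mk_surjective y
  have hn' : (0 : ℝ) < n := by positivity
  refine ⟨toIcoMod hp.out (n * x) s / n, ⟨?_, ?_⟩, ?_⟩
  · rw [le_div_iff₀ hn', mul_comm]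
    exact (toIcoMod_mem_Ico _ _ _).1
  · rw [div_lt_iff₀ hn', add_mul, div_mul_cancel₀ _ hn'.ne', mul_comm]
    exact (toIcoMod_mem_Ico _ _ _).2
  · rw [← AddCircle.coe_nsmul, nsmul_eq_mul, mul_div_cancel₀ _ hn'.ne', toIcoMod,
      AddCircle.coe_sub, AddCircle.coe_zsmul, AddCircle.coe_period, smul_zero, sub_zero]

theorem AddCircle.eventually_surjOn_nsmul {ι : Type*} [Fintype ι] {p : ℝ} [Fact (0 < p)]
    {V : Set (ι → AddCircle p)} (hV : IsOpen V) (hne : V.Nonempty) :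
    ∀ᶠ n : ℕ in atTop, SurjOn (fun v => n • v) V univ := by
  let π : (ι → ℝ) → ι → AddCircle p := fun t i => t i
  have hπ : Continuous π :=
    continuous_pi fun i => (AddCircle.continuous_mk' p).comp (continuous_apply i)
  obtain ⟨x, hx⟩ := hne
  obtain ⟨x', rfl⟩ : ∃ x', π x' = x := ⟨fun i => (QuotientAddGroup.mk_surjective (x i)).choose,
    funext fun i => (QuotientAddGroup.mk_surjective (x i)).choose_spec⟩
  obtain ⟨ε, hε, hball⟩ := Metric.isOpen_iff.mp (hV.preimage hπ) x' hx
  have hsmall : ∀ᶠ n : ℕ in atTop, p / n < ε :=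
    (tendsto_const_div_atTop_nhds_zero_nat p).eventually (gt_mem_nhds hε)
  filter_upwards [hsmall, eventually_ne_atTop 0] with n hn hn0
  rintro y -
  choose t ht hty using fun i => AddCircle.exists_mem_Ico_nsmul_coe_eq (x' i) hn0 (y i)
  refine ⟨π t, hball ?_, funext hty⟩
  rw [Metric.mem_ball, dist_pi_lt_iff hε]
  intro i
  rw [Real.dist_eq, abs_lt]
  constructor <;> linarith [(ht i).1, (ht i).2]

theorem exists_dense_zmultiples_prod_zmod {X : Type*} [AddCommGroup X] [TopologicalSpace X]
    [ContinuousAdd X] [BaireSpace X] [SecondCountableTopology X]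
    (hX : ∀ V : Set X, IsOpen V → V.Nonempty →
      ∀ᶠ n : ℕ in atTop, SurjOn (fun v => n • v) V univ)
    (ℓ : ℕ) [NeZero ℓ] :
    ∃ g : X, Dense (AddSubgroup.zmultiples (g, (1 : ZMod ℓ)) : Set (X × ZMod ℓ)) := by
  obtain ⟨B, hBc, hB0, hB⟩ := TopologicalSpace.exists_countable_basis X
  have : Countable B := hBc.to_subtype
  let A : B × ℕ → Set X := fun i => ⋃ N : ℕ, (fun g => (i.2 + ℓ * N) • g) ⁻¹' i.1
  have hA_open : ∀ i, IsOpen (A i) := fun i =>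
    isOpen_iUnion fun N => (hB.isOpen i.1.2).preimage (continuous_nsmul _)
  have hA_dense : ∀ i, Dense (A i) := by
    rintro ⟨⟨U, hU⟩, j⟩
    obtain ⟨u, hu⟩ := nonempty_iff_ne_empty.2 (ne_of_mem_of_not_mem hU hB0)
    refine dense_iff_inter_open.2 fun V hV hVne => ?_
    obtain ⟨N, hN⟩ := (hX V hV hVne).exists_forall_of_atTop
    have hjN : N ≤ j + ℓ * N := le_add_left (Nat.le_mul_of_pos_left N (NeZero.pos ℓ))
    obtain ⟨v, hvV, hvu⟩ := hN _ hjN (mem_univ u)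
    exact ⟨v, hvV, mem_iUnion.2 ⟨N, by simpa [hvu]⟩⟩
  obtain ⟨g, hg⟩ := (dense_iInter_of_isOpen hA_open hA_dense).nonempty
  refine ⟨g, dense_iff_inter_open.2 ?_⟩
  rintro O hO ⟨⟨x, b⟩, hxb⟩
  obtain ⟨U', V', hU', -, hxU', hbV', hsub⟩ := isOpen_prod_iff.1 hO x b hxb
  obtain ⟨U, hUB, hxU, hUU'⟩ := hB.exists_subset_of_mem_open hxU' hU'
  obtain ⟨N, hN⟩ := mem_iUnion.1 (mem_iInter.1 hg (⟨U, hUB⟩, b.val))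
  refine ⟨(b.val + ℓ * N) • (g, 1), hsub ⟨hUU' ?_, ?_⟩,
    ⟨(b.val + ℓ * N : ℕ), natCast_zsmul _ _⟩⟩
  · simpa using hN
  · simpa using hbV'

theorem dense_zmultiples_map {G H : Type*} [AddGroup G] [AddGroup H] [TopologicalSpace G]
    [TopologicalSpace H] {g : G} (hg : Dense (AddSubgroup.zmultiples g : Set G)) (f : G →+ H)
    (hf : Continuous f) (hf' : DenseRange f) :
    Dense (AddSubgroup.zmultiples (f g) : Set H) := by
  rw [← AddMonoidHom.map_zmultiples, AddSubgroup.coe_map]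
  exact hf'.dense_image hf hg

theorem isAddCyclic_of_dense_zmultiples {F : Type*} [AddGroup F] [TopologicalSpace F]
    [DiscreteTopology F] {g : F} (hg : Dense (AddSubgroup.zmultiples g : Set F)) :
    IsAddCyclic F :=
  ⟨g, fun x => AddSubgroup.mem_zmultiples_iff.1 <| SetLike.mem_coe.1 <|
    (dense_discrete.1 hg).symm ▸ mem_univ x⟩

def ContinuousAddEquiv.prodCongr {A B C D : Type*} [AddGroup A] [AddGroup B] [AddGroup C]
    [AddGroup D] [TopologicalSpace A] [TopologicalSpace B] [TopologicalSpace C]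
    [TopologicalSpace D] (f : A ≃ₜ+ B) (g : C ≃ₜ+ D) : A × C ≃ₜ+ B × D :=
  (f.toAddEquiv.prodCongr g.toAddEquiv).toContinuousAddEquiv fun _ =>
    (f.toHomeomorph.prodCongr g.toHomeomorph).isOpen_preimage

theorem topologicallyCyclic_iff_torus_times_finite_cyclic_general
    (T : Type) [AddCommGroup T] [TopologicalSpace T]
    (m : ℕ) (F : Type) [AddCommGroup F] [Fintype F] [TopologicalSpace F]
    [DiscreteTopology F]
    (e : T ≃ₜ ((Fin m → AddCircle (1 : ℝ)) × F))
    (he : ∀ x y : T, e (x + y) = e x + e y) :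
    (∃ g : T, Dense ((AddSubgroup.zmultiples g : AddSubgroup T) : Set T)) ↔
      ∃ (m' ℓ : ℕ), 0 < ℓ ∧
        ∃ e' : T ≃ₜ ((Fin m' → AddCircle (1 : ℝ)) × ZMod ℓ),
          ∀ x y : T, e' (x + y) = e' x + e' y := by
  constructor
  · rintro ⟨g, hg⟩
    let E : T ≃ₜ+ (Fin m → AddCircle (1 : ℝ)) × F :=
      (AddEquiv.mk e.toEquiv he).toContinuousAddEquiv fun _ => e.isOpen_preimage
    have hF : IsAddCyclic F := isAddCyclic_of_dense_zmultiples <|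
      dense_zmultiples_map hg ((AddMonoidHom.snd _ _).comp E.toAddMonoidHom)
        (continuous_snd.comp E.continuous) (Prod.snd_surjective.comp E.surjective).denseRange
    let ψ : F ≃ₜ+ ZMod (Nat.card F) :=
      (zmodAddCyclicAddEquiv hF).symm.toContinuousAddEquiv fun _ => by simp only [isOpen_discrete]
    let E' := E.trans ((ContinuousAddEquiv.refl _).prodCongr ψ)
    exact ⟨m, Nat.card F, Nat.card_pos, E'.toHomeomorph, map_add E'⟩
  · rintro ⟨m', ℓ, hℓ, e', he'⟩
    have : NeZero ℓ := ⟨hℓ.ne'⟩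
    obtain ⟨g, hg⟩ := exists_dense_zmultiples_prod_zmod (X := Fin m' → AddCircle (1 : ℝ))
      (fun _ => AddCircle.eventually_surjOn_nsmul) ℓ
    let E : (Fin m' → AddCircle (1 : ℝ)) × ZMod ℓ ≃ₜ+ T :=
      ((AddEquiv.mk e'.toEquiv he').toContinuousAddEquiv fun _ => e'.isOpen_preimage).symm
    exact ⟨E (g, 1), dense_zmultiples_map hg E.toAddMonoidHom E.continuous E.surjective.denseRange⟩

/-- A compact abelian Lie group `T` (i.e. a compact abelian topological group that is
isomorphic, as a topological group, to `𝕋^m × F` with `F` finite) is topologically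
cyclic — contains an element generating a dense subgroup — if and only if it is
isomorphic as a topological group to `𝕋^{m'} × ℤ/ℓℤ` for some `m' ≥ 0`, `ℓ ≥ 1`. -/
theorem topologicallyCyclic_iff_torus_times_finite_cyclic
    (T : Type) [AddCommGroup T] [TopologicalSpace T] [IsTopologicalAddGroup T]
    [CompactSpace T]
    (m : ℕ) (F : Type) [AddCommGroup F] [Fintype F] [TopologicalSpace F]
    [DiscreteTopology F]
    (e : T ≃ₜ ((Fin m → AddCircle (1 : ℝ)) × F))
    (he : ∀ x y : T, e (x + y) = e x + e y) :
    (∃ g : T, Dense ((AddSubgroup.zmultiples g : AddSubgroup T) : Set T)) ↔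
      ∃ (m' ℓ : ℕ), 0 < ℓ ∧
        ∃ e' : T ≃ₜ ((Fin m' → AddCircle (1 : ℝ)) × ZMod ℓ),
          ∀ x y : T, e' (x + y) = e' x + e' y :=
  topologicallyCyclic_iff_torus_times_finite_cyclic_general T m F e he
end
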